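/- arXiv:2209.01901 — 7 statements merged into one kernel-verified Lean document; each statement's English description precedes it below -/
import Mathlib

section
/- For all points a, b, c in a metric space, real z ≥ 1, and 0 < t ≤ 1, we have |d(a,c)^z − d(b,c)^z| ≤ t · d(a,c)^z + (3z/t)^(z−1) · d(a,b)^z. -/
/-!
Write `x = d(a,c)`, `y = d(b,c)`, `s = d(a,b)`, so that `x ≤ y + s` and `y ≤ x + s`. Convexity of
`r ↦ r ^ z` with weights `1 - t/(3z)` and `t/(3z)` gives
`(u + v) ^ z ≤ (1 - t/(3z)) ^ (1 - z) u ^ z + (3z/t) ^ (z - 1) v ^ z`, and Bernoulli's inequality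
bounds the first coefficient by `1 + t`. Applied to `y ≤ x + s` and to `x ≤ y + s` this bounds
both `y ^ z - x ^ z` and `x ^ z - y ^ z` by the right-hand side.
-/

namespace Real

theorem add_rpow_le_rpow_one_sub_mul_rpow_add {u v p w₁ w₂ : ℝ} (hu : 0 ≤ u) (hv : 0 ≤ v)
    (hp : 1 ≤ p) (hw₁ : 0 < w₁) (hw₂ : 0 < w₂) (hw : w₁ + w₂ = 1) :
    (u + v) ^ p ≤ w₁ ^ (1 - p) * u ^ p + w₂ ^ (1 - p) * v ^ p := by
  have hconv := (convexOn_rpow hp).2 (Set.mem_Ici.2 (div_nonneg hu hw₁.le))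
    (Set.mem_Ici.2 (div_nonneg hv hw₂.le)) hw₁.le hw₂.le hw
  have hsum : w₁ • (u / w₁) + w₂ • (v / w₂) = u + v := by
    simp only [smul_eq_mul]
    field_simp
  have hweight : ∀ {w r : ℝ}, 0 < w → 0 ≤ r → w • (r / w) ^ p = w ^ (1 - p) * r ^ p := by
    intro w r hw hr
    rw [smul_eq_mul, div_rpow hr hw.le, rpow_sub hw, rpow_one]
    ring
  rwa [hsum, hweight hw₁ hu, hweight hw₂ hv] at hconv

theorem one_sub_div_rpow_one_sub_le_one_add {p t : ℝ} (hp : 1 ≤ p) (ht0 : 0 ≤ t) (ht2 : t ≤ 2) :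
    (1 - t / (3 * p)) ^ (1 - p) ≤ 1 + t := by
  have hp0 : 0 < p := by linarith
  have hfrac0 : 0 ≤ t / (3 * p) := by positivity
  have hfrac : p * (t / (3 * p)) = t / 3 := by field_simp
  have hbase : 0 < 1 - t / (3 * p) := by nlinarith
  have hbernoulli : 1 - t / 3 ≤ (1 - t / (3 * p)) ^ p := by
    have := one_add_mul_self_le_rpow_one_add (s := -(t / (3 * p))) (by linarith) hp
    rwa [mul_neg, hfrac, ← sub_eq_add_neg, ← sub_eq_add_neg] at this
  calc (1 - t / (3 * p)) ^ (1 - p) = (1 - t / (3 * p)) / (1 - t / (3 * p)) ^ p := by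
        rw [rpow_sub hbase, rpow_one]
    _ ≤ 1 / (1 - t / 3) := by
        gcongr
        · linarith
        · linarith
    _ ≤ 1 + t := by
        rw [div_le_iff₀ (by linarith)]
        nlinarith

theorem add_rpow_le_one_add_mul_rpow_add {u v p t : ℝ} (hu : 0 ≤ u) (hv : 0 ≤ v) (hp : 1 ≤ p)
    (ht0 : 0 < t) (ht2 : t ≤ 2) :
    (u + v) ^ p ≤ (1 + t) * u ^ p + (3 * p / t) ^ (p - 1) * v ^ p := by
  have hp0 : 0 < p := by linarith
  have hfrac : t / (3 * p) = (3 * p / t)⁻¹ := by rw [inv_div]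
  have hfrac_lt : t / (3 * p) < 1 := by
    rw [div_lt_one (by positivity)]
    linarith
  have hsplit := add_rpow_le_rpow_one_sub_mul_rpow_add hu hv hp (sub_pos.2 hfrac_lt) (by positivity : 0 < t / (3 * p)) (sub_add_cancel _ _)
  have hcoeff : (t / (3 * p)) ^ (1 - p) = (3 * p / t) ^ (p - 1) := by
    rw [hfrac, inv_rpow (by positivity), ← rpow_neg (by positivity), neg_sub]
  rw [hcoeff] at hsplit
  have := mul_le_mul_of_nonneg_right (one_sub_div_rpow_one_sub_le_one_add hp ht0.le ht2)
    (rpow_nonneg hu p)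
  linarith

theorem abs_rpow_sub_rpow_le_of_le_add {x y s p t : ℝ} (hx : 0 ≤ x) (hy : 0 ≤ y)
    (hxy : x ≤ y + s) (hyx : y ≤ x + s) (hp : 1 ≤ p) (ht0 : 0 < t) (ht2 : t ≤ 2) :
    |x ^ p - y ^ p| ≤ t * x ^ p + (3 * p / t) ^ (p - 1) * s ^ p := by
  have hs : 0 ≤ s := by linarith
  have hp0 : 0 ≤ p := by linarith
  have hsp : 0 ≤ (3 * p / t) ^ (p - 1) * s ^ p := by positivity
  have hxp : 0 ≤ x ^ p := rpow_nonneg hx p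
  rw [abs_sub_le_iff]
  constructor
  · rcases le_total x y with hle | hle
    · have := rpow_le_rpow hx hle hp0
      nlinarith
    · have := rpow_le_rpow (hy.trans hle) hxy hp0
      have := add_rpow_le_one_add_mul_rpow_add hy hs hp ht0 ht2
      have := rpow_le_rpow hy hle hp0
      nlinarith
  · have := rpow_le_rpow hy hyx hp0
    have := add_rpow_le_one_add_mul_rpow_add hx hs hp ht0 ht2
    linarith

end Real

theorem generalized_triangle_ineq_diff
    {X : Type*} [MetricSpace X] (a b c : X) (z t : ℝ)
    (hz : 1 ≤ z) (ht0 : 0 < t) (ht1 : t ≤ 1) :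
    |dist a c ^ z - dist b c ^ z|
      ≤ t * dist a c ^ z + (3 * z / t) ^ (z - 1) * dist a b ^ z := by
  have hac : dist a c ≤ dist b c + dist a b := by
    rw [add_comm]
    exact dist_triangle a b c
  have hbc : dist b c ≤ dist a c + dist a b := by
    rw [add_comm, dist_comm a b]
    exact dist_triangle b a c
  exact Real.abs_rpow_sub_rpow_le_of_le_add dist_nonneg dist_nonneg hac hbc hz ht0
    (by linarith)
end

section
/- Let c be a point in a metric space, r > 0, and suppose G is a set of points with max_{x∈G} d(x,c) = d(p_far, c) and u is a point with d(p_far, c) < (ε/(24z)) · d(u,c) for 0 < ε < 1 and z ≥ 1. Then for every x ∈ G: (a) d(p_far, c) < (ε/(12z)) · d(x,u), and (b) d(x,u)^z ∈ (1 ± ε/6) · d(u,c)^z. -/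
/-!
Since `G` lies in the ball of radius `dist pf c` around `c`, and this radius is at most a fraction
`δ = ε / (24 z)` of `dist u c`, the triangle inequality pins every `dist x u`, `x ∈ G`, inside
`(1 ± δ) · dist u c`. Raising to the power `z` costs a factor `(1 ± δ) ^ z`, which Bernoulli's
inequality and `(1 + t / z) ^ z ≤ exp t ≤ 1 + 4 t` keep within `1 ± ε / 6`.
-/

open Real

section Metric

variable {X : Type*} [PseudoMetricSpace X]

theorem dist_mem_Ioo_of_dist_lt_mul {x u c : X} {δ : ℝ} (h : dist x c < δ * dist u c) :
    (1 - δ) * dist u c < dist x u ∧ dist x u < (1 + δ) * dist u c := by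
  have hdiff := abs_le.1 (dist_comm c u ▸ abs_dist_sub_le x c u)
  constructor <;> linarith [hdiff.1, hdiff.2]

theorem dist_lt_two_mul_mul_dist {x p u c : X} {δ : ℝ} (hδ0 : 0 ≤ δ) (hδ : δ ≤ 1 / 2)
    (hxp : dist x c ≤ dist p c) (hp : dist p c < δ * dist u c) :
    dist p c < 2 * δ * dist x u := by
  have hxu := (dist_mem_Ioo_of_dist_lt_mul (hxp.trans_lt hp)).1
  have hD : 0 ≤ dist u c := dist_nonneg
  calc dist p c < δ * dist u c := hp
    _ ≤ 2 * δ * ((1 - δ) * dist u c) := by nlinarith [mul_nonneg hδ0 hD]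
    _ ≤ 2 * δ * dist x u := by gcongr

end Metric

theorem one_sub_le_one_sub_div_rpow {t z : ℝ} (hz : 1 ≤ z) (ht : t ≤ z) :
    1 - t ≤ (1 - t / z) ^ z := by
  have hz0 : z ≠ 0 := by positivity
  have hs : -1 ≤ -(t / z) := by
    rw [neg_le_neg_iff, div_le_one (by positivity)]; exact ht
  simpa [mul_div_cancel₀ t hz0, sub_eq_add_neg] using one_add_mul_self_le_rpow_one_add hs hz

theorem one_add_div_rpow_le_exp {t z : ℝ} (hz : 0 < z) (ht : -z ≤ t) :
    (1 + t / z) ^ z ≤ exp t := by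
  have hbase : 0 ≤ 1 + t / z := by
    rw [← neg_le_iff_add_nonneg', le_div_iff₀ hz]; linarith
  calc (1 + t / z) ^ z ≤ exp (t / z) ^ z := by
        gcongr; linarith [add_one_le_exp (t / z)]
    _ = exp t := by rw [← exp_mul, div_mul_cancel₀ t hz.ne']

theorem exp_le_one_add_four_mul {t : ℝ} (h0 : 0 ≤ t) (h1 : t ≤ 3 / 4) : exp t ≤ 1 + 4 * t :=
  calc exp t ≤ 1 / (1 - t) := exp_bound_div_one_sub_of_interval h0 (by linarith)
    _ ≤ 1 + 4 * t := by
      rw [div_le_iff₀ (by linarith)]; nlinarith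

theorem mul_rpow_le_rpow_of_mul_le {a D y z : ℝ} (ha : 0 ≤ a) (hD : 0 ≤ D) (hz : 0 ≤ z)
    (h : a * D ≤ y) : a ^ z * D ^ z ≤ y ^ z := by
  rw [← mul_rpow ha hD]; exact rpow_le_rpow (by positivity) h hz

theorem rpow_le_mul_rpow_of_le_mul {a D y z : ℝ} (ha : 0 ≤ a) (hD : 0 ≤ D) (hy : 0 ≤ y)
    (hz : 0 ≤ z) (h : y ≤ a * D) : y ^ z ≤ a ^ z * D ^ z := by
  rw [← mul_rpow ha hD]; exact rpow_le_rpow hy h hz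

theorem far_center_distance_bounds_general
    {X : Type*} [MetricSpace X] (c u : X) (z ε : ℝ)
    (hz : 1 ≤ z) (hε0 : 0 < ε) (hε1 : ε < 1)
    (G : Finset X) (pf : X)
    (hmax : ∀ x ∈ G, dist x c ≤ dist pf c)
    (hfar : dist pf c < (ε / (24 * z)) * dist u c) :
    ∀ x ∈ G,
      dist pf c < (ε / (12 * z)) * dist x u ∧
      (1 - ε / 6) * dist u c ^ z ≤ dist x u ^ z ∧
      dist x u ^ z ≤ (1 + ε / 6) * dist u c ^ z := by
  intro x hx
  have hz0 : 0 < z := by positivity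
  set t := ε / 24 with ht
  have hδ : ε / (24 * z) = t / z := (div_div ε 24 z).symm
  have hδ0 : 0 ≤ t / z := by positivity
  have hδ1 : t / z ≤ 1 / 2 := by
    rw [div_le_iff₀ hz0]; linarith
  rw [hδ] at hfar
  obtain ⟨hlo, hhi⟩ := dist_mem_Ioo_of_dist_lt_mul ((hmax x hx).trans_lt hfar)
  refine ⟨?_, ?_, ?_⟩
  · rw [show ε / (12 * z) = 2 * (t / z) by rw [ht]; ring]
    exact dist_lt_two_mul_mul_dist hδ0 hδ1 (hmax x hx) hfar
  · calc (1 - ε / 6) * dist u c ^ z ≤ (1 - t / z) ^ z * dist u c ^ z := by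
          gcongr; linarith [one_sub_le_one_sub_div_rpow hz (show t ≤ z by linarith)]
      _ ≤ dist x u ^ z :=
          mul_rpow_le_rpow_of_mul_le (by linarith) dist_nonneg hz0.le hlo.le
  · calc dist x u ^ z ≤ (1 + t / z) ^ z * dist u c ^ z :=
          rpow_le_mul_rpow_of_le_mul (by linarith) dist_nonneg dist_nonneg hz0.le hhi.le
      _ ≤ (1 + ε / 6) * dist u c ^ z := by
          gcongr
          calc (1 + t / z) ^ z ≤ exp t := one_add_div_rpow_le_exp hz0 (by linarith)
            _ ≤ 1 + 4 * t := exp_le_one_add_four_mul (by positivity) (by linarith)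
            _ = 1 + ε / 6 := by rw [ht]; ring

theorem far_center_distance_bounds
    {X : Type*} [MetricSpace X] (c u : X) (z ε : ℝ)
    (hz : 1 ≤ z) (hε0 : 0 < ε) (hε1 : ε < 1)
    (G : Finset X) (pf : X) (hpf : pf ∈ G)
    (hmax : ∀ x ∈ G, dist x c ≤ dist pf c)
    (hfar : dist pf c < (ε / (24 * z)) * dist u c) :
    ∀ x ∈ G,
      dist pf c < (ε / (12 * z)) * dist x u ∧
      (1 - ε / 6) * dist u c ^ z ≤ dist x u ^ z ∧
      dist x u ^ z ≤ (1 + ε / 6) * dist u c ^ z :=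
  far_center_distance_bounds_general c u z ε hz hε0 hε1 G pf hmax hfar
end

section
/- Let c be a point in a metric space, G a set of points, p_close ∈ G the closest point of G to c, and u a point with d(p_close, c) > (9z/ε) · d(u,c) where z ≥ 1 and 0 < ε < 1. Then for every x ∈ G, d(x,u)^z ∈ (1 ± ε/6) · d(x,c)^z. -/
/-!
Put `δ = ε / (9z)`. Since `p_close` is the closest point of `G` to `c`, every `x ∈ G` satisfies
`d(u,c) < δ · d(p_close,c) ≤ δ · d(x,c)`, so by the triangle inequality `d(x,u)` lies between
`(1 - δ) d(x,c)` and `(1 + δ) d(x,c)`. Raising to the power `z`, Bernoulli's inequality gives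
`(1 - δ)^z ≥ 1 - zδ = 1 - ε/9`, and `(1 + δ)^z ≤ exp(zδ) = exp(ε/9) ≤ 1 + ε/6`.
-/

open Real

lemma dist_mem_Icc_of_dist_le_mul {X : Type*} [PseudoMetricSpace X] {x u c : X} {δ : ℝ}
    (h : dist u c ≤ δ * dist x c) :
    (1 - δ) * dist x c ≤ dist x u ∧ dist x u ≤ (1 + δ) * dist x c := by
  constructor <;> linarith [dist_triangle x u c, dist_triangle x c u, dist_comm c u]

lemma one_sub_mul_mul_rpow_le_rpow {a b δ z : ℝ} (hb : 0 ≤ b) (hδ : δ ≤ 1) (hz : 1 ≤ z)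
    (hab : (1 - δ) * b ≤ a) : (1 - z * δ) * b ^ z ≤ a ^ z := by
  have hbern : 1 - z * δ ≤ (1 - δ) ^ z := by
    simpa [sub_eq_add_neg] using one_add_mul_self_le_rpow_one_add (s := -δ) (by linarith) hz
  calc (1 - z * δ) * b ^ z ≤ (1 - δ) ^ z * b ^ z := by gcongr
    _ = ((1 - δ) * b) ^ z := (mul_rpow (by linarith) hb).symm
    _ ≤ a ^ z := by gcongr

lemma rpow_le_exp_mul_mul_rpow {a b δ z : ℝ} (ha : 0 ≤ a) (hb : 0 ≤ b) (hδ : 0 ≤ δ)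
    (hz : 0 ≤ z) (hab : a ≤ (1 + δ) * b) : a ^ z ≤ exp (z * δ) * b ^ z :=
  calc a ^ z ≤ ((1 + δ) * b) ^ z := by gcongr
    _ = (1 + δ) ^ z * b ^ z := mul_rpow (by linarith) hb
    _ ≤ exp δ ^ z * b ^ z := by gcongr; linarith [add_one_le_exp δ]
    _ = exp (z * δ) * b ^ z := by rw [← exp_mul, mul_comm δ]

lemma exp_div_nine_le_one_add_div_six {ε : ℝ} (hε0 : 0 ≤ ε) (hε1 : ε ≤ 1) :
    exp (ε / 9) ≤ 1 + ε / 6 := by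
  have hquad : exp (ε / 9) - 1 - ε / 9 ≤ (ε / 9) ^ 2 :=
    (abs_le.mp (abs_exp_sub_one_sub_id_le (by rw [abs_le]; constructor <;> linarith))).2
  nlinarith

theorem close_center_distance_bounds_general
    {X : Type*} [MetricSpace X] (c u : X) (z ε : ℝ)
    (hz : 1 ≤ z) (hε0 : 0 < ε) (hε1 : ε < 1)
    (G : Finset X) (pc : X)
    (hmin : ∀ x ∈ G, dist pc c ≤ dist x c)
    (hclose : dist pc c > (9 * z / ε) * dist u c) :
    ∀ x ∈ G,
      (1 - ε / 6) * dist x c ^ z ≤ dist x u ^ z ∧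
      dist x u ^ z ≤ (1 + ε / 6) * dist x c ^ z := by
  intro x hx
  set δ := ε / (9 * z) with hδ
  have hz0 : 0 < z := by linarith
  have hzδ : z * δ = ε / 9 := by rw [hδ]; field_simp
  have huc : dist u c ≤ δ * dist x c :=
    calc dist u c = δ * ((9 * z / ε) * dist u c) := by rw [hδ]; field_simp
      _ ≤ δ * dist pc c := by gcongr
      _ ≤ δ * dist x c := by gcongr; exact hmin x hx
  obtain ⟨hlow, hup⟩ := dist_mem_Icc_of_dist_le_mul huc
  have hδ1 : δ ≤ 1 := by rw [div_le_one (by positivity)]; linarith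
  constructor
  · calc (1 - ε / 6) * dist x c ^ z ≤ (1 - z * δ) * dist x c ^ z := by
          rw [hzδ]; gcongr; linarith
      _ ≤ dist x u ^ z := one_sub_mul_mul_rpow_le_rpow dist_nonneg hδ1 hz hlow
  · calc dist x u ^ z ≤ exp (z * δ) * dist x c ^ z :=
          rpow_le_exp_mul_mul_rpow dist_nonneg dist_nonneg (by positivity) hz0.le hup
      _ ≤ (1 + ε / 6) * dist x c ^ z := by
          rw [hzδ]; gcongr; exact exp_div_nine_le_one_add_div_six hε0.le hε1.le

theorem close_center_distance_bounds
    {X : Type*} [MetricSpace X] (c u : X) (z ε : ℝ)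
    (hz : 1 ≤ z) (hε0 : 0 < ε) (hε1 : ε < 1)
    (G : Finset X) (pc : X) (hpc : pc ∈ G)
    (hmin : ∀ x ∈ G, dist pc c ≤ dist x c)
    (hclose : dist pc c > (9 * z / ε) * dist u c) :
    ∀ x ∈ G,
      (1 - ε / 6) * dist x c ^ z ≤ dist x u ^ z ∧
      dist x u ^ z ≤ (1 + ε / 6) * dist x c ^ z :=
  close_center_distance_bounds_general c u z ε hz hε0 hε1 G pc hmin hclose
end

section
/- Let P ⊆ X be a finite set, c ∈ X, z ≥ 1, 0 < ε < 1, and r = (cost_z(P,c)/|P|)^(1/z). Suppose s ∈ X satisfies d(s,c) > 5r/ε. Then cost_z(P, s) ≥ (2^(z+1)/ε) · cost_z(P, c), where cost_z(Q, u) = ∑_{q∈Q} d(q,u)^z. -/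
/-! Instead of counting the points close to `c`, average the power-mean inequality
`d(s,c)^z ≤ (d(p,s) + d(p,c))^z ≤ 2^(z-1) (d(p,s)^z + d(p,c)^z)` over `p ∈ P`: with `C = |P| r^z`
this gives `(5/ε)^z C ≤ 2^(z-1) (cost(P,s) + C)`, and the constant wins because
`4^z + 2^(z-1) ≤ 5^z` for `z ≥ 1`. -/

theorem Real.rpow_add_le_mul_rpow_add_rpow {a b p : ℝ} (ha : 0 ≤ a) (hb : 0 ≤ b) (hp : 1 ≤ p) :
    (a + b) ^ p ≤ 2 ^ (p - 1) * (a ^ p + b ^ p) := by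
  lift a to NNReal using ha
  lift b to NNReal using hb
  exact_mod_cast NNReal.rpow_add_le_mul_rpow_add_rpow a b hp

theorem four_rpow_add_two_rpow_sub_one_le_five_rpow {z : ℝ} (hz : 1 ≤ z) :
    (4 : ℝ) ^ z + 2 ^ (z - 1) ≤ 5 ^ z := by
  have h54 : (5 / 4 : ℝ) ≤ (5 / 4) ^ z := by
    simpa using Real.rpow_le_rpow_of_exponent_le (by norm_num : (1 : ℝ) ≤ 5 / 4) hz
  have h24 : (2 : ℝ) ^ (z - 1) ≤ 4 ^ z / 4 := by
    rw [← Real.rpow_sub_one (by norm_num)]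
    exact Real.rpow_le_rpow (by norm_num) (by norm_num) (by linarith)
  have h5 : (5 : ℝ) ^ z = (5 / 4) ^ z * 4 ^ z := by
    rw [← Real.mul_rpow (by norm_num) (by norm_num)]
    norm_num
  nlinarith [Real.rpow_pos_of_pos (by norm_num : (0 : ℝ) < 4) z]

theorem two_rpow_sub_one_mul_add_one_le_five_div_rpow {z ε : ℝ} (hz : 1 ≤ z) (hε0 : 0 < ε) (hε1 : ε ≤ 1) :
    2 ^ (z - 1) * (2 ^ (z + 1) / ε + 1) ≤ (5 / ε) ^ z := by
  have hεz : ε ^ z ≤ ε := Real.rpow_le_self_of_le_one hε0.le hε1 hz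
  have h4 : (2 : ℝ) ^ (z - 1) * 2 ^ (z + 1) = 4 ^ z := by
    rw [← Real.rpow_add two_pos, show z - 1 + (z + 1) = 2 * z by ring, Real.rpow_mul two_pos.le]
    norm_num
  calc 2 ^ (z - 1) * (2 ^ (z + 1) / ε + 1) = (4 ^ z + ε * 2 ^ (z - 1)) / ε := by
        rw [← h4]; field_simp
    _ ≤ 5 ^ z / ε := by
        gcongr
        nlinarith [four_rpow_add_two_rpow_sub_one_le_five_rpow hz, Real.rpow_pos_of_pos two_pos (z - 1)]
    _ ≤ 5 ^ z / ε ^ z := by gcongr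
    _ = (5 / ε) ^ z := (Real.div_rpow (by norm_num) hε0.le z).symm

theorem card_mul_dist_rpow_le_mul_sum_add_sum {X : Type*} [PseudoMetricSpace X] (P : Finset X) (c s : X)
    {z : ℝ} (hz : 1 ≤ z) :
    P.card * dist s c ^ z ≤ 2 ^ (z - 1) * (∑ p ∈ P, dist p s ^ z + ∑ p ∈ P, dist p c ^ z) := by
  rw [← Finset.sum_add_distrib, Finset.mul_sum, ← nsmul_eq_mul, ← Finset.sum_const]
  refine Finset.sum_le_sum fun p _ => ?_
  calc dist s c ^ z ≤ (dist p s + dist p c) ^ z :=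
        Real.rpow_le_rpow dist_nonneg (dist_triangle_left s c p) (by linarith)
    _ ≤ _ := Real.rpow_add_le_mul_rpow_add_rpow dist_nonneg dist_nonneg hz

theorem Finset.sum_eq_card_mul_rpow_one_div_rpow {ι : Type*} (P : Finset ι) (f : ι → ℝ)
    (hf : ∀ i ∈ P, 0 ≤ f i) {z : ℝ} (hz : z ≠ 0) :
    ∑ i ∈ P, f i = P.card * (((∑ i ∈ P, f i) / P.card) ^ (1 / z)) ^ z := by
  rcases P.eq_empty_or_nonempty with rfl | hP
  · simp
  rw [one_div, Real.rpow_inv_rpow (div_nonneg (Finset.sum_nonneg hf) (by positivity)) hz,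
    mul_div_cancel₀ _ (by exact_mod_cast hP.card_pos.ne')]

theorem far_center_cost_lower_bound_general
    {X : Type*} [MetricSpace X] (c s : X) (z ε : ℝ)
    (hz : 1 ≤ z) (hε0 : 0 < ε) (hε1 : ε < 1)
    (P : Finset X) (r : ℝ)
    (hr : r = ((∑ p ∈ P, dist p c ^ z) / P.card) ^ (1 / z))
    (hs : 5 * r / ε < dist s c) :
    (2 ^ (z + 1) / ε) * ∑ p ∈ P, dist p c ^ z ≤ ∑ p ∈ P, dist p s ^ z := by
  set C := ∑ p ∈ P, dist p c ^ z
  have hC : C = P.card * r ^ z :=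
    hr ▸ Finset.sum_eq_card_mul_rpow_one_div_rpow P _ (fun _ _ => by positivity) (by linarith)
  have hC0 : 0 ≤ C := Finset.sum_nonneg fun _ _ => by positivity
  have hr0 : 0 ≤ r := hr ▸ Real.rpow_nonneg (div_nonneg hC0 (Nat.cast_nonneg _)) _
  have hfar : (5 * r / ε) ^ z ≤ dist s c ^ z := Real.rpow_le_rpow (by positivity) hs.le (by linarith)
  have h2 : (0 : ℝ) < 2 ^ (z - 1) := by positivity
  suffices 2 ^ (z - 1) * ((2 ^ (z + 1) / ε + 1) * C) ≤ 2 ^ (z - 1) * (∑ p ∈ P, dist p s ^ z + C) by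
    linarith [le_of_mul_le_mul_left this h2]
  calc 2 ^ (z - 1) * ((2 ^ (z + 1) / ε + 1) * C)
      ≤ (5 / ε) ^ z * C := by
        rw [← mul_assoc]
        gcongr
        exact two_rpow_sub_one_mul_add_one_le_five_div_rpow hz hε0 hε1.le
    _ = P.card * (5 * r / ε) ^ z := by
        rw [hC, Real.div_rpow, Real.div_rpow, Real.mul_rpow] <;> first | positivity | ring
    _ ≤ P.card * dist s c ^ z := mul_le_mul_of_nonneg_left hfar (Nat.cast_nonneg _)
    _ ≤ _ := card_mul_dist_rpow_le_mul_sum_add_sum P c s hz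

theorem far_center_cost_lower_bound
    {X : Type*} [MetricSpace X] (c s : X) (z ε : ℝ)
    (hz : 1 ≤ z) (hε0 : 0 < ε) (hε1 : ε < 1)
    (P : Finset X) (hP : P.Nonempty) (r : ℝ)
    (hr : r = ((∑ p ∈ P, dist p c ^ z) / P.card) ^ (1 / z))
    (hs : 5 * r / ε < dist s c) :
    (2 ^ (z + 1) / ε) * ∑ p ∈ P, dist p c ^ z ≤ ∑ p ∈ P, dist p s ^ z :=
  far_center_cost_lower_bound_general c s z ε hz hε0 hε1 P r hr hs
end

section
/- Let P_far ⊆ X be a finite set of points, c ∈ X, with min_{x∈P_far} d(x,c) > (24z/ε)·d(s,c) for some point s ∈ X, z ≥ 1, and 0 < ε < 1. Then |cost_z(P_far, s) − cost_z(P_far, c)| ≤ (ε/8)·cost_z(P_far, s) + (ε/8)·∑_{x∈P_far}(ε·d(x,c)/(24z))^z·(24z/ε)^z ≤ (ε/8)·cost_z(P_far,s) + (ε/8)·cost_z(P_far,c). More precisely: |cost_z(P_far,s) − cost_z(P_far,c)| ≤ (ε/8)·cost_z(P_far,s) + (24z/ε)^(z−1)·|P_far|·d(s,c)^z, and (24z/ε)^(z−1)·|P_far|·d(s,c)^z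 ≤ (ε/8)·cost_z(P_far,c) under the stated distance hypothesis (using (24z/ε)^{z-1}·(ε/(24z))^z = ε/(24z) ≤ ε/8). -/
/-!
Write `t = ε / 8`. Convexity of `r ↦ r ^ z`, applied to `a + δ = (1 - λ) (a / (1 - λ)) + λ (δ / λ)`
with `λ = t / (3z)`, gives the generalized triangle inequality
`(a + δ) ^ z ≤ (1 + t) a ^ z + (3z / t) ^ (z - 1) δ ^ z`; the price `(1 - λ) ^ (1 - z)` of the first
term is at most `exp (t / 2) ≤ 1 + t`. With `a, δ` the distances `d(x, s), d(s, c)` this bounds each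
term of `cost(P, s) - cost(P, c)`. For a far point, `d(s, c) ≤ d(x, c) / r` with `r = 24z / ε`, so the
additive error `r ^ (z - 1) d(s, c) ^ z` is at most `d(x, c) ^ z / r ≤ t d(x, c) ^ z`.
-/

open Real

lemma mul_div_rpow_eq {w a : ℝ} (hw : 0 < w) (ha : 0 ≤ a) (z : ℝ) :
    w * (a / w) ^ z = w ^ (1 - z) * a ^ z := by
  rw [div_rpow ha hw.le, rpow_sub hw, rpow_one]
  ring

lemma add_rpow_le_one_sub_rpow_mul_add_rpow_mul {a b w z : ℝ} (ha : 0 ≤ a) (hb : 0 ≤ b)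
    (hw0 : 0 < w) (hw1 : w < 1) (hz : 1 ≤ z) :
    (a + b) ^ z ≤ (1 - w) ^ (1 - z) * a ^ z + w ^ (1 - z) * b ^ z := by
  have hw' : 0 < 1 - w := by linarith
  have hconv := (convexOn_rpow hz).2 (Set.mem_Ici.2 (div_nonneg ha hw'.le))
    (Set.mem_Ici.2 (div_nonneg hb hw0.le)) hw'.le hw0.le (by ring)
  simp only [smul_eq_mul, mul_div_cancel₀ _ hw'.ne', mul_div_cancel₀ _ hw0.ne'] at hconv
  rwa [mul_div_rpow_eq hw' ha, mul_div_rpow_eq hw0 hb] at hconv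

lemma one_add_rpow_le_exp_mul {x y : ℝ} (hx : -1 ≤ x) (hy : 0 ≤ y) :
    (1 + x) ^ y ≤ exp (x * y) := by
  rw [exp_mul]
  exact rpow_le_rpow (by linarith) (by linarith [add_one_le_exp x]) hy

lemma exp_half_le_one_add {t : ℝ} (ht0 : 0 ≤ t) (ht1 : t ≤ 1) : exp (t / 2) ≤ 1 + t := by
  refine (exp_bound_div_one_sub_of_interval (by linarith) (by linarith)).trans ?_
  rw [div_le_iff₀ (by linarith)]
  nlinarith

lemma one_sub_div_rpow_one_sub_le {t z : ℝ} (ht0 : 0 ≤ t) (ht1 : t ≤ 1) (hz : 1 ≤ z) :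
    (1 - t / (3 * z)) ^ (1 - z) ≤ 1 + t := by
  have hz0 : 0 < z := by linarith
  have hl0 : 0 < 1 - t / (3 * z) := by
    rw [sub_pos, div_lt_one (by positivity)]
    linarith
  have hinv : (1 - t / (3 * z))⁻¹ ≤ 1 + t / (2 * z) := by
    rw [inv_le_iff_one_le_mul₀ hl0]
    have : 0 ≤ t / z * (1 - t / z) := mul_nonneg (by positivity)
      (by rw [sub_nonneg, div_le_one hz0]; linarith)
    field_simp at this ⊢
    nlinarith
  calc (1 - t / (3 * z)) ^ (1 - z) = (1 - t / (3 * z))⁻¹ ^ (z - 1) := by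
        rw [inv_rpow hl0.le, ← rpow_neg hl0.le, neg_sub]
    _ ≤ (1 + t / (2 * z)) ^ (z - 1) := rpow_le_rpow (inv_nonneg.2 hl0.le) hinv (by linarith)
    _ ≤ exp (t / (2 * z) * (z - 1)) :=
        one_add_rpow_le_exp_mul (by linarith [div_nonneg ht0 (by positivity : (0 : ℝ) ≤ 2 * z)])
          (by linarith)
    _ ≤ exp (t / 2) := by
        gcongr
        rw [div_mul_eq_mul_div, div_le_div_iff₀ (by positivity) two_pos]
        nlinarith
    _ ≤ 1 + t := exp_half_le_one_add ht0 ht1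

lemma add_rpow_le_one_add_mul_rpow_add {a δ t z : ℝ} (ha : 0 ≤ a) (hδ : 0 ≤ δ) (ht0 : 0 < t)
    (ht1 : t ≤ 1) (hz : 1 ≤ z) :
    (a + δ) ^ z ≤ (1 + t) * a ^ z + (3 * z / t) ^ (z - 1) * δ ^ z := by
  have hz0 : 0 < z := by linarith
  have hw1 : t / (3 * z) < 1 := by
    rw [div_lt_one (by positivity)]
    linarith
  have hw : (t / (3 * z)) ^ (1 - z) = (3 * z / t) ^ (z - 1) := by
    rw [← inv_div, inv_rpow (by positivity), ← rpow_neg (by positivity), neg_sub]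
  calc (a + δ) ^ z
      ≤ (1 - t / (3 * z)) ^ (1 - z) * a ^ z + (t / (3 * z)) ^ (1 - z) * δ ^ z :=
        add_rpow_le_one_sub_rpow_mul_add_rpow_mul ha hδ (by positivity) hw1 hz
    _ ≤ (1 + t) * a ^ z + (3 * z / t) ^ (z - 1) * δ ^ z := by
        rw [hw]
        gcongr
        exact one_sub_div_rpow_one_sub_le ht0.le ht1 hz

lemma abs_rpow_sub_rpow_le {a b δ t z : ℝ} (ha : 0 ≤ a) (hb : 0 ≤ b) (hab : |a - b| ≤ δ)
    (ht0 : 0 < t) (ht1 : t ≤ 1) (hz : 1 ≤ z) :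
    |a ^ z - b ^ z| ≤ t * a ^ z + (3 * z / t) ^ (z - 1) * δ ^ z := by
  have hz0 : 0 ≤ z := by linarith
  have hδ : 0 ≤ δ := (abs_nonneg _).trans hab
  obtain ⟨hab', hba'⟩ := abs_sub_le_iff.1 hab
  have hC : 0 ≤ (3 * z / t) ^ (z - 1) * δ ^ z := by positivity
  rw [abs_sub_le_iff]
  constructor
  · rcases le_total b a with hle | hle
    · have ha_le : a ^ z ≤ (1 + t) * b ^ z + (3 * z / t) ^ (z - 1) * δ ^ z :=
        (rpow_le_rpow ha (by linarith) hz0).trans (add_rpow_le_one_add_mul_rpow_add hb hδ ht0 ht1 hz)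
      nlinarith [rpow_le_rpow hb hle hz0]
    · linarith [rpow_le_rpow ha hle hz0, mul_nonneg ht0.le (rpow_nonneg ha z)]
  · have hb_le : b ^ z ≤ (1 + t) * a ^ z + (3 * z / t) ^ (z - 1) * δ ^ z :=
      (rpow_le_rpow hb (by linarith) hz0).trans (add_rpow_le_one_add_mul_rpow_add ha hδ ht0 ht1 hz)
    linarith

lemma abs_dist_rpow_sub_dist_rpow_le {X : Type*} [PseudoMetricSpace X] (x s c : X) {t z : ℝ}
    (ht0 : 0 < t) (ht1 : t ≤ 1) (hz : 1 ≤ z) :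
    |dist x s ^ z - dist x c ^ z| ≤ t * dist x s ^ z + (3 * z / t) ^ (z - 1) * dist s c ^ z := by
  refine abs_rpow_sub_rpow_le dist_nonneg dist_nonneg ?_ ht0 ht1 hz
  rw [dist_comm x s, dist_comm x c]
  exact abs_dist_sub_le s c x

lemma rpow_sub_one_mul_rpow_le_div {r δ D z : ℝ} (hr : 0 < r) (hδ : 0 ≤ δ) (hz : 0 ≤ z)
    (h : r * δ ≤ D) : r ^ (z - 1) * δ ^ z ≤ D ^ z / r := by
  have hrδ : r ^ (z - 1) * δ ^ z = (r * δ) ^ z / r := by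
    rw [rpow_sub hr, rpow_one, mul_rpow hr.le hδ]
    ring
  rw [hrδ]
  gcongr

theorem far_points_cost_error
    {X : Type*} [MetricSpace X] (c s : X) (z ε : ℝ)
    (hz : 1 ≤ z) (hε0 : 0 < ε) (hε1 : ε < 1)
    (Pfar : Finset X)
    (hfar : ∀ x ∈ Pfar, (24 * z / ε) * dist s c < dist x c) :
    |(∑ x ∈ Pfar, dist x s ^ z) - ∑ x ∈ Pfar, dist x c ^ z|
        ≤ (ε / 8) * (∑ x ∈ Pfar, dist x s ^ z)
          + (24 * z / ε) ^ (z - 1) * (Pfar.card : ℝ) * dist s c ^ z ∧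
    (24 * z / ε) ^ (z - 1) * (Pfar.card : ℝ) * dist s c ^ z
        ≤ (ε / 8) * ∑ x ∈ Pfar, dist x c ^ z := by
  have hr : 3 * z / (ε / 8) = 24 * z / ε := by field_simp; ring
  have hsum_const : (24 * z / ε) ^ (z - 1) * (Pfar.card : ℝ) * dist s c ^ z
      = ∑ _x ∈ Pfar, (24 * z / ε) ^ (z - 1) * dist s c ^ z := by
    rw [Finset.sum_const, nsmul_eq_mul]
    ring
  constructor
  · calc |(∑ x ∈ Pfar, dist x s ^ z) - ∑ x ∈ Pfar, dist x c ^ z|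
        ≤ ∑ x ∈ Pfar, |dist x s ^ z - dist x c ^ z| := by
          rw [← Finset.sum_sub_distrib]
          exact Finset.abs_sum_le_sum_abs _ _
      _ ≤ ∑ x ∈ Pfar, ((ε / 8) * dist x s ^ z + (24 * z / ε) ^ (z - 1) * dist s c ^ z) :=
          Finset.sum_le_sum fun x _ => hr ▸
            abs_dist_rpow_sub_dist_rpow_le x s c (by positivity) (by linarith) hz
      _ = _ := by rw [Finset.sum_add_distrib, ← Finset.mul_sum, hsum_const]
  · rw [hsum_const, Finset.mul_sum]
    refine Finset.sum_le_sum fun x hx => ?_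
    calc (24 * z / ε) ^ (z - 1) * dist s c ^ z
        ≤ dist x c ^ z / (24 * z / ε) :=
          rpow_sub_one_mul_rpow_le_div (by positivity) dist_nonneg (by linarith) (hfar x hx).le
      _ = ε / (24 * z) * dist x c ^ z := by field_simp
      _ ≤ ε / 8 * dist x c ^ z := by
          gcongr
          linarith
end

section
/- Let B = R₁ ∪ R₂ ∪ ... ∪ R_m be a finite sequence of disjoint finite weighted point sets ('rings') each with cost_z(R_i, c) ≤ E for a threshold E > 0, and total cost ∑_i cost_z(R_i, c) = T. Then the rings can be partitioned into at most 3·(⌈T/E⌉ + 1) consecutive groups, each group being a union of consecutive rings, such that every group G satisfies cost_z(G, c) ≤ E. -/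
/-!
Lay the rings end to end on a line, ring `i` occupying a segment of length `cost i ≤ E`, and cut
the line into cells of length `E`. Every ring either lies inside one cell or crosses exactly one
cut. Grouping the rings inside a common cell together and giving each crossing ring a group of its
own yields consecutive groups of cost at most `E`, and at most `2 ⌊T / E⌋ + 1` of them.
-/

open Finset

lemma floor_sum_div_le_of_subset {ι : Type*} {w : ι → ℝ} {E : ℝ} (hw : ∀ i, 0 ≤ w i)
    (hE : 0 ≤ E) {s t : Finset ι} (h : s ⊆ t) :
    ⌊(∑ j ∈ s, w j) / E⌋₊ ≤ ⌊(∑ j ∈ t, w j) / E⌋₊ :=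
  Nat.floor_le_floor <| div_le_div_of_nonneg_right
    (sum_le_sum_of_subset_of_nonneg h fun j _ _ => hw j) hE

section CellLabel

variable {ι : Type*} [LinearOrder ι] [LocallyFiniteOrderBot ι] {w : ι → ℝ} {E : ℝ}

variable (w E) in
/-- Item `i` occupies the segment `[∑_{j<i} w j, ∑_{j≤i} w j]` of a line cut into cells of
length `E`. The label is `2k` if the segment starts and ends in cell `k`, and `2k + 1` if it
starts in cell `k` and ends in cell `k + 1` (when `w i ≤ E`, these are the only cases). -/
noncomputable def cellLabel (i : ι) : ℕ :=
  ⌊(∑ j ∈ Iio i, w j) / E⌋₊ + ⌊(∑ j ∈ Iic i, w j) / E⌋₊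

lemma cellLabel_mono (hw : ∀ i, 0 ≤ w i) (hE : 0 ≤ E) : Monotone (cellLabel w E) :=
  fun _ _ h => add_le_add (floor_sum_div_le_of_subset hw hE (Iio_subset_Iio h))
    (floor_sum_div_le_of_subset hw hE (Iic_subset_Iic.2 h))

lemma cellLabel_le_two_mul_floor [Fintype ι] (hw : ∀ i, 0 ≤ w i) (hE : 0 ≤ E) (i : ι) :
    cellLabel w E i ≤ 2 * ⌊(∑ j, w j) / E⌋₊ := by
  have := floor_sum_div_le_of_subset hw hE (subset_univ (Iio i))
  have := floor_sum_div_le_of_subset hw hE (subset_univ (Iic i))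
  unfold cellLabel
  omega

lemma sum_Iic_sub_sum_Iio_le_of_cellLabel_eq (hw : ∀ i, 0 ≤ w i) (hwE : ∀ i, w i ≤ E)
    (hE : 0 < E) {i i' : ι} (hle : i ≤ i') (h : cellLabel w E i = cellLabel w E i') :
    ∑ j ∈ Iic i', w j - ∑ j ∈ Iio i, w j ≤ E := by
  obtain rfl | hlt := hle.eq_or_lt
  · rw [Iic_eq_cons_Iio, sum_cons]
    linarith [hwE i]
  -- The segment of `i` ends before that of `i'` starts, so equal labels force both into one cell.
  have hcell : ⌊(∑ j ∈ Iio i, w j) / E⌋₊ = ⌊(∑ j ∈ Iic i', w j) / E⌋₊ := by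
    have := floor_sum_div_le_of_subset hw hE.le (Iio_subset_Iic_self (a := i))
    have := floor_sum_div_le_of_subset hw hE.le (Iio_subset_Iic_self (a := i'))
    have := floor_sum_div_le_of_subset hw hE.le
      (fun j hj => mem_Iio.2 ((mem_Iic.1 hj).trans_lt hlt) : Iic i ⊆ Iio i')
    unfold cellLabel at h
    omega
  have hstart := Nat.floor_le (div_nonneg (sum_nonneg fun j _ => hw j) hE.le)
    (a := (∑ j ∈ Iio i, w j) / E)
  have hend := Nat.lt_floor_add_one ((∑ j ∈ Iic i', w j) / E)
  rw [hcell, le_div_iff₀ hE] at hstart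
  rw [div_lt_iff₀ hE] at hend
  linarith

lemma sum_le_of_cellLabel_eq (hw : ∀ i, 0 ≤ w i) (hwE : ∀ i, w i ≤ E) (hE : 0 < E)
    {s : Finset ι} (hs : ∀ i ∈ s, ∀ i' ∈ s, cellLabel w E i = cellLabel w E i') :
    ∑ i ∈ s, w i ≤ E := by
  rcases s.eq_empty_or_nonempty with rfl | hne
  · simpa using hE.le
  have hsub : s ⊆ Iic (s.max' hne) \ Iio (s.min' hne) := fun i hi =>
    mem_sdiff.2 ⟨mem_Iic.2 (s.le_max' i hi), fun h => (mem_Iio.1 h).not_ge (s.min'_le i hi)⟩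
  calc ∑ i ∈ s, w i
      ≤ ∑ i ∈ Iic (s.max' hne) \ Iio (s.min' hne), w i :=
        sum_le_sum_of_subset_of_nonneg hsub fun j _ _ => hw j
    _ = ∑ i ∈ Iic (s.max' hne), w i - ∑ i ∈ Iio (s.min' hne), w i :=
        sum_sdiff_eq_sub (Iio_subset_Iic_self.trans (Iic_subset_Iic.2 (s.min'_le_max' hne)))
    _ ≤ E := sum_Iic_sub_sum_Iio_le_of_cellLabel_eq hw hwE hE (s.min'_le_max' hne)
        (hs _ (s.min'_mem hne) _ (s.max'_mem hne))

end CellLabel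

theorem ring_grouping_general
    {X : Type*} [MetricSpace X] [DecidableEq X] (c : X) (z E T : ℝ)
    (hE : 0 < E)
    (m : ℕ) (R : Fin m → Finset X)
    (hdisj : ∀ i j, i ≠ j → Disjoint (R i) (R j))
    (hcost : ∀ i, ∑ p ∈ R i, dist p c ^ z ≤ E)
    (hT : ∑ i, ∑ p ∈ R i, dist p c ^ z = T) :
    ∃ g : ℕ, g ≤ 3 * (⌈T / E⌉₊ + 1) ∧
      ∃ f : Fin m → Fin g, Monotone f ∧
        ∀ j : Fin g,
          ∑ p ∈ (Finset.univ.filter fun i => f i = j).biUnion R,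
            dist p c ^ z ≤ E := by
  set cost : Fin m → ℝ := fun i => ∑ p ∈ R i, dist p c ^ z
  have hcost0 (i : Fin m) : 0 ≤ cost i := sum_nonneg fun p _ => Real.rpow_nonneg dist_nonneg z
  have hlabel (i : Fin m) : cellLabel cost E i < 2 * ⌊T / E⌋₊ + 1 :=
    Nat.lt_succ_of_le (hT ▸ cellLabel_le_two_mul_floor hcost0 hE.le i)
  refine ⟨2 * ⌊T / E⌋₊ + 1, by have := Nat.floor_le_ceil (T / E); omega,
    fun i => ⟨cellLabel cost E i, hlabel i⟩, fun i i' h => cellLabel_mono hcost0 hE.le h, ?_⟩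
  intro j
  rw [sum_biUnion fun i _ i' _ hii' => hdisj i i' hii']
  refine sum_le_of_cellLabel_eq hcost0 hcost hE fun i hi i' hi' => ?_
  simp only [mem_filter, mem_univ, true_and] at hi hi'
  exact congrArg Fin.val (hi.trans hi'.symm)

theorem ring_grouping
    {X : Type*} [MetricSpace X] [DecidableEq X] (c : X) (z E T : ℝ)
    (hz : 1 ≤ z) (hE : 0 < E)
    (m : ℕ) (R : Fin m → Finset X)
    (hdisj : ∀ i j, i ≠ j → Disjoint (R i) (R j))
    (hcost : ∀ i, ∑ p ∈ R i, dist p c ^ z ≤ E)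
    (hT : ∑ i, ∑ p ∈ R i, dist p c ^ z = T) :
    ∃ g : ℕ, g ≤ 3 * (⌈T / E⌉₊ + 1) ∧
      ∃ f : Fin m → Fin g, Monotone f ∧
        ∀ j : Fin g,
          ∑ p ∈ (Finset.univ.filter fun i => f i = j).biUnion R,
            dist p c ^ z ≤ E :=
  ring_grouping_general c z E T hE m R hdisj hcost hT
end

section
/- Let ℱ = {f_x : X → ℝ≥0}_{x∈P} be a family of functions with shattering dimension sdim(ℱ) = t, where for c ∈ X, r ≥ 0, B_ℱ(c,r) = {f_x ∈ ℱ : f_x(c) ≤ r}. Define the k-extension ℱ^(k) = {f_x^(k) : X^k → ℝ≥0} by f_x^(k)(C) = min_{c∈C} f_x(c). Then sdim(ℱ^(k)) ≤ k · sdim(ℱ), i.e., for every H ⊆ ℱ^(k) with |H| ≥ 2, |{B_{ℱ^(k)}(C, r) ∩ H : C ∈ X^k, r ≥ 0}| ≤ |H|^(k·t). -/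
/-!
A point set `C` of size `k` captures `x` at radius `r` iff one of its points does, so every trace
`B(C, r) ∩ H` of a `k`-extended ball is the union of the `k` traces `B(c, r) ∩ H`, `c ∈ C`. Hence
there are at most `(|H| ^ t) ^ k` of them. For `k = 0` the minimum over the empty set is `sInf ∅ = 0`,
so the only trace is `H` itself.
-/

open Set

theorem ciInf_le_iff_of_finite {ι α : Type*} [ConditionallyCompleteLinearOrder α] [Finite ι]
    [Nonempty ι] {g : ι → α} {r : α} : ⨅ i, g i ≤ r ↔ ∃ i, g i ≤ r := by
  refine ⟨fun h => ?_, fun ⟨i, hi⟩ => (ciInf_le (finite_range g).bddBelow i).trans hi⟩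
  obtain ⟨i, hi⟩ := exists_eq_ciInf_of_finite (f := g)
  exact ⟨i, hi ▸ h⟩

theorem ncard_range_iUnion_le {α ι : Type*} [Finite ι] {𝒮 : Set (Set α)} (h𝒮 : 𝒮.Finite) :
    (range fun g : ι → 𝒮 => ⋃ i, (g i : Set α)).ncard ≤ 𝒮.ncard ^ Nat.card ι := by
  have := h𝒮.to_subtype
  rw [← Nat.card_coe_set_eq, ← Nat.card_coe_set_eq 𝒮, ← Nat.card_fun]
  exact Finite.card_range_le _

section Traces

variable {X P : Type*} (f : P → X → ℝ) (H : Finset P)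

def ballTraces : Set (Set P) :=
  {S | ∃ (c : X) (r : ℝ), 0 ≤ r ∧ S = {x | x ∈ H ∧ f x c ≤ r}}

/-- The traces `B_{ℱ^(k)}(C, r) ∩ H`, with the `k` centres indexed by `ι`. -/
def minBallTraces (ι : Type*) : Set (Set P) :=
  {S | ∃ (C : ι → X) (r : ℝ), 0 ≤ r ∧ S = {x | x ∈ H ∧ sInf (range fun i => f x (C i)) ≤ r}}

theorem ballTraces_finite : (ballTraces f H).Finite :=
  H.finite_toSet.finite_subsets.subset fun _ ⟨_, _, _, hS⟩ => hS ▸ fun _ hx => hx.1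

theorem minBallTraces_subset_range_iUnion (ι : Type*) [Finite ι] [Nonempty ι] :
    minBallTraces f H ι ⊆ range fun g : ι → ballTraces f H => ⋃ i, (g i : Set P) := by
  rintro S ⟨C, r, hr, rfl⟩
  refine ⟨fun i => ⟨{x | x ∈ H ∧ f x (C i) ≤ r}, C i, r, hr, rfl⟩, ?_⟩
  ext x
  simp only [mem_iUnion, mem_ofPred_eq]
  exact ⟨fun ⟨i, hxH, hi⟩ => ⟨hxH, ciInf_le_iff_of_finite.2 ⟨i, hi⟩⟩,
    fun ⟨hxH, h⟩ => (ciInf_le_iff_of_finite.1 h).imp fun _ hi => ⟨hxH, hi⟩⟩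

theorem ncard_minBallTraces_le (ι : Type*) [Finite ι] [Nonempty ι] :
    (minBallTraces f H ι).ncard ≤ (ballTraces f H).ncard ^ Nat.card ι := by
  have := (ballTraces_finite f H).to_subtype
  exact (ncard_le_ncard (minBallTraces_subset_range_iUnion f H ι) (toFinite _)).trans
    (ncard_range_iUnion_le (ballTraces_finite f H))

theorem minBallTraces_of_isEmpty (ι : Type*) [IsEmpty ι] :
    minBallTraces f H ι ⊆ {(H : Set P)} := by
  rintro S ⟨C, r, hr, rfl⟩
  ext x
  simp [range_eq_empty, Real.sInf_empty, hr]

end Traces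

theorem sdim_k_extension_general
    {X P : Type*} (f : P → X → ℝ) (k t : ℕ)
    (hsdim : ∀ H : Finset P, 2 ≤ H.card →
      Set.ncard {S : Set P | ∃ (c : X) (r : ℝ), 0 ≤ r ∧
        S = {x | x ∈ H ∧ f x c ≤ r}} ≤ H.card ^ t) :
    ∀ H : Finset P, 2 ≤ H.card →
      Set.ncard {S : Set P | ∃ (C : Fin k → X) (r : ℝ), 0 ≤ r ∧
        S = {x | x ∈ H ∧ sInf (Set.range fun i => f x (C i)) ≤ r}}
      ≤ H.card ^ (k * t) := by
  intro H hH
  change (minBallTraces f H (Fin k)).ncard ≤ _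
  rcases k.eq_zero_or_pos with rfl | hk
  · calc (minBallTraces f H (Fin 0)).ncard ≤ ({(H : Set P)} : Set (Set P)).ncard :=
          ncard_le_ncard (minBallTraces_of_isEmpty f H _) (finite_singleton _)
      _ = H.card ^ (0 * t) := by simp
  · have : NeZero k := ⟨hk.ne'⟩
    calc (minBallTraces f H (Fin k)).ncard ≤ (ballTraces f H).ncard ^ k := by
          simpa using ncard_minBallTraces_le f H (Fin k)
      _ ≤ (H.card ^ t) ^ k := Nat.pow_le_pow_left (hsdim H hH) k
      _ = H.card ^ (k * t) := by rw [← pow_mul, mul_comm]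

theorem sdim_k_extension
    {X P : Type*} (f : P → X → ℝ) (k t : ℕ) (ht : 1 ≤ t)
    (hsdim : ∀ H : Finset P, 2 ≤ H.card →
      Set.ncard {S : Set P | ∃ (c : X) (r : ℝ), 0 ≤ r ∧
        S = {x | x ∈ H ∧ f x c ≤ r}} ≤ H.card ^ t) :
    ∀ H : Finset P, 2 ≤ H.card →
      Set.ncard {S : Set P | ∃ (C : Fin k → X) (r : ℝ), 0 ≤ r ∧
        S = {x | x ∈ H ∧ sInf (Set.range fun i => f x (C i)) ≤ r}}
      ≤ H.card ^ (k * t) :=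
  sdim_k_extension_general f k t hsdim
end
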